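/- arXiv:0809.4936 — 3 statements merged into one kernel-verified Lean document; each statement's English description precedes it below -/
import Mathlib

section
/- Let D_n be the n×n symmetric tridiagonal matrix with diagonal entries all equal to 1/2, entry (1,2) and (2,1) equal to 1/(2√2), and all other super- and sub-diagonal entries equal to 1/4. Then the characteristic polynomial of D_n equals the monic Chebyshev polynomial T̄_n(x) = 2^{-2n+1} cos(n arccos(2x−1)) on [0,1]. -/
/-!
Expanding a symmetric tridiagonal determinant along its first row gives a three-term recurrence.
Writing `y = 2x - 1`, the matrix `xI - D_n` has diagonal `2y · (1/4)` and off-diagonal entries of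
square `(1/4)^2`, except for the first one, whose square is `2 (1/4)^2`. Away from the first row the
recurrence is that of `4^{-k} U_k(y)`; the first row then yields
`2 · 4^{-n} (y U_{n-1}(y) - U_{n-2}(y)) = 2 · 4^{-n} T_n(y)`, and `T_n(cos θ) = cos nθ`.
-/

open Polynomial Polynomial.Chebyshev

namespace Matrix

variable {R : Type*} [CommRing R]

def symmTridiagonal (d f : ℕ → R) (n : ℕ) : Matrix (Fin n) (Fin n) R :=
  of fun i j =>
    if (i : ℕ) = j then d i
    else if (i : ℕ) + 1 = j then f i
    else if (j : ℕ) + 1 = i then f j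
    else 0

theorem symmTridiagonal_submatrix_succ (d f : ℕ → R) (n : ℕ) :
    (symmTridiagonal d f (n + 1)).submatrix Fin.succ Fin.succ =
      symmTridiagonal (fun k => d (k + 1)) (fun k => f (k + 1)) n := by
  ext i j
  simp only [submatrix_apply, symmTridiagonal, of_apply, Fin.val_succ]
  split_ifs <;> first | rfl | omega

theorem det_symmTridiagonal_succ_succ (d f : ℕ → R) (n : ℕ) :
    (symmTridiagonal d f (n + 2)).det =
      d 0 * (symmTridiagonal (fun k => d (k + 1)) (fun k => f (k + 1)) (n + 1)).det -
        f 0 ^ 2 * (symmTridiagonal (fun k => d (k + 2)) (fun k => f (k + 2)) n).det := by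
  set M := symmTridiagonal d f (n + 2)
  have hM00 : M 0 0 = d 0 := by simp [M, symmTridiagonal]
  have hM01 : M 0 1 = f 0 := by simp [M, symmTridiagonal]
  have hM10 : M 1 0 = f 0 := by simp [M, symmTridiagonal]
  have hrow : ∀ j : Fin n, M 0 j.succ.succ = 0 := fun _ => by simp [M, symmTridiagonal]
  have hcol : ∀ i : Fin n, M i.succ.succ 0 = 0 := fun _ => by simp [M, symmTridiagonal]
  have hsucc : M.submatrix Fin.succ Fin.succ =
      symmTridiagonal (fun k => d (k + 1)) (fun k => f (k + 1)) (n + 1) :=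
    symmTridiagonal_submatrix_succ d f (n + 1)
  have hsucc₂ : M.submatrix (Fin.succ ∘ Fin.succ) (Fin.succAbove 1 ∘ Fin.succ) =
      symmTridiagonal (fun k => d (k + 2)) (fun k => f (k + 2)) n := by
    have : (Fin.succAbove 1 ∘ Fin.succ : Fin n → Fin (n + 2)) = Fin.succ ∘ Fin.succ := by
      ext j; simp [Fin.succAbove, Fin.lt_def]
    rw [this, ← submatrix_submatrix, hsucc, symmTridiagonal_submatrix_succ]
  have hminor : (M.submatrix Fin.succ (Fin.succAbove 1)).det =
      f 0 * (symmTridiagonal (fun k => d (k + 2)) (fun k => f (k + 2)) n).det := by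
    rw [det_succ_column_zero, Fin.sum_univ_succ]
    simp [hcol, hM10, hsucc₂]
  rw [det_succ_row_zero, Fin.sum_univ_succ, Fin.sum_univ_succ]
  simp only [Fin.coe_ofNat_eq_mod, Nat.zero_mod, pow_zero, hM00, one_mul, Fin.succAbove_zero,
    hsucc, Fin.succ_zero_eq_one, Nat.one_mod, pow_one, hM01, neg_mul, hminor, Fin.val_succ, hrow,
    mul_zero, zero_mul, Finset.sum_const_zero, add_zero]
  ring

theorem scalar_sub_symmTridiagonal (x : R) (d f : ℕ → R) (n : ℕ) :
    scalar (Fin n) x - symmTridiagonal d f n =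
      symmTridiagonal (fun i => x - d i) (fun i => -f i) n := by
  ext i j
  simp only [sub_apply, scalar_apply, diagonal_apply, symmTridiagonal, of_apply, Fin.val_inj]
  split_ifs <;> simp_all

theorem det_symmTridiagonal_eq_U (y c : R) {d f : ℕ → R} (hd : ∀ i, d i = 2 * y * c)
    (hf : ∀ i, f i ^ 2 = c ^ 2) (k : ℕ) :
    (symmTridiagonal d f k).det = c ^ k * (U R k).eval y := by
  induction k using Nat.twoStepInduction generalizing d f with
  | zero => simp
  | one =>
    simp only [symmTridiagonal, Fin.val_eq_zero, ↓reduceIte, hd, det_unique, Fin.default_eq_zero,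
      of_apply, pow_one, Nat.cast_one, U_one, eval_mul, eval_ofNat, eval_X]
    ring
  | more k ih₀ ih₁ =>
    rw [det_symmTridiagonal_succ_succ, ih₁ (fun _ => hd _) (fun _ => hf _),
      ih₀ (fun _ => hd _) (fun _ => hf _), hd, hf]
    push_cast
    rw [U_add_two]
    simp only [eval_sub, eval_mul, eval_ofNat, eval_X]
    ring

theorem det_symmTridiagonal_eq_T (y c : R) {d f : ℕ → R} (hd : ∀ i, d i = 2 * y * c)
    (hf₀ : f 0 ^ 2 = 2 * c ^ 2) (hf : ∀ i, f (i + 1) ^ 2 = c ^ 2) (k : ℕ) :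
    (symmTridiagonal d f (k + 1)).det = 2 * c ^ (k + 1) * (T R (k + 1 : ℕ)).eval y := by
  cases k with
  | zero =>
    simp only [Nat.reduceAdd, symmTridiagonal, Fin.val_eq_zero, ↓reduceIte, hd, det_unique,
      Fin.default_eq_zero, of_apply, zero_add, pow_one, Nat.cast_one, T_one, eval_X]
    ring
  | succ k =>
    rw [det_symmTridiagonal_succ_succ, det_symmTridiagonal_eq_U y c (fun _ => hd _) hf,
      det_symmTridiagonal_eq_U y c (fun _ => hd _) (fun _ => hf _), hd, hf₀]
    push_cast
    rw [show (k : ℤ) + 1 + 1 = k + 2 by ring, T_eq_X_mul_U_sub_U]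
    simp only [eval_sub, eval_mul, eval_X]
    ring

end Matrix

/-- The characteristic polynomial of the tridiagonal matrix `D_n` (diagonal `1/2`,
entries `(1,2)` and `(2,1)` equal to `1/(2√2)`, remaining sub/super-diagonal entries
`1/4`) agrees on `[0,1]` with the monic Chebyshev polynomial
`T̄_n(x) = 2^(-2n+1) cos (n arccos (2x-1))`. -/
theorem charpoly_eq_chebyshev (n : ℕ) (hn : 1 ≤ n) (D : Matrix (Fin n) (Fin n) ℝ)
    (hD : ∀ i j : Fin n, D i j =
      if i = j then 1 / 2
      else if (i:ℕ) + 1 = j ∨ (j:ℕ) + 1 = i then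
        (if (i:ℕ) = 0 ∨ (j:ℕ) = 0 then 1 / (2 * Real.sqrt 2) else 1 / 4)
      else 0) :
    ∀ x ∈ Set.Icc (0:ℝ) 1,
      (Matrix.charpoly D).eval x =
        (2:ℝ) ^ (-(2 * (n:ℤ)) + 1) * Real.cos (n * Real.arccos (2 * x - 1)) := by
  rintro x ⟨hx₀, hx₁⟩
  obtain ⟨m, rfl⟩ := Nat.exists_eq_add_of_le' hn
  let f : ℕ → ℝ := fun i => if i = 0 then 1 / (2 * Real.sqrt 2) else 1 / 4
  have hD' : D = Matrix.symmTridiagonal (fun _ => 1 / 2) f (m + 1) := by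
    ext i j
    simp only [hD, Matrix.symmTridiagonal, Matrix.of_apply, Fin.ext_iff, f]
    split_ifs <;> first | rfl | omega
  have hf₀ : (-f 0) ^ 2 = 2 * (1 / 4 : ℝ) ^ 2 := by norm_num [f, div_pow, mul_pow]
  have hpow : (2:ℝ) ^ (-(2 * ((m + 1 : ℕ) : ℤ)) + 1) = 2 * (1 / 4) ^ (m + 1) := by
    rw [zpow_add₀ two_ne_zero, zpow_one, zpow_neg, mul_comm, zpow_mul, zpow_natCast, one_div_pow]
    norm_num
  have hT : (T ℝ (m + 1 : ℕ)).eval (2 * x - 1) =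
      Real.cos ((m + 1 : ℕ) * Real.arccos (2 * x - 1)) := by
    have := T_real_cos (Real.arccos (2 * x - 1)) (m + 1 : ℕ)
    rwa [Real.cos_arccos (by linarith) (by linarith)] at this
  rw [Matrix.eval_charpoly, hD', Matrix.scalar_sub_symmTridiagonal,
    Matrix.det_symmTridiagonal_eq_T (2 * x - 1) (1 / 4) (fun _ => by ring) hf₀
      (fun _ => by simp [f]), hpow, hT]
end

section
/- Let F and G be distribution functions on ℝ with respective point masses 1/n at points X_{(1)} ≤ … ≤ X_{(n)} and x_{(1)} ≤ … ≤ x_{(n)}. Then the Lévy distance satisfies L(F,G)³ ≤ (1/n) Σ_{j=1}^n |X_{(j)} − x_{(j)}|². -/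
open scoped Classical

/-- The Lévy distance between two distribution functions. -/
noncomputable def levyDist (F G : ℝ → ℝ) : ℝ :=
  sInf {ε : ℝ | 0 < ε ∧ ∀ x : ℝ, F (x - ε) - ε ≤ G x ∧ G x ≤ F (x + ε) + ε}

/-!
If `F (x - ε) - ε > G x`, then more than `n ε` indices `j` have `X j ≤ x - ε < x < Y j`, hence
`|X j - Y j| > ε`; by Markov's counting argument this forces `∑ |X j - Y j|² > n ε³`. So every
`ε > 0` with `ε³ ≥ (1/n) ∑ |X j - Y j|²` is admissible in the definition of the Lévy distance.
-/

open Finset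

lemma levyDist_nonneg (F G : ℝ → ℝ) : 0 ≤ levyDist F G :=
  Real.sInf_nonneg fun _ hε => hε.1.le

lemma levyDist_le {F G : ℝ → ℝ} {c : ℝ} (hc : 0 ≤ c)
    (h : ∀ ε > c, ∀ x, F (x - ε) - ε ≤ G x ∧ G x ≤ F (x + ε) + ε) : levyDist F G ≤ c :=
  le_of_forall_gt_imp_ge_of_dense fun ε hε =>
    csInf_le ⟨0, fun _ hδ => hδ.1.le⟩ ⟨hc.trans_lt hε, h ε hε⟩

section Empirical

variable {ι : Type*} [Fintype ι]

noncomputable def empiricalCDF (Z : ι → ℝ) (t : ℝ) : ℝ :=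
  (#{j | Z j ≤ t} : ℝ) / Fintype.card ι

lemma card_mul_sq_le_sum_sq_abs_sub (Z W : ι → ℝ) {ε : ℝ} (hε : 0 ≤ ε) (s : Finset ι)
    (hs : ∀ j ∈ s, ε ≤ |Z j - W j|) : #s * ε ^ 2 ≤ ∑ j, |Z j - W j| ^ 2 :=
  calc #s * ε ^ 2 = ∑ _j ∈ s, ε ^ 2 := by rw [sum_const, nsmul_eq_mul]
    _ ≤ ∑ j ∈ s, |Z j - W j| ^ 2 :=
        sum_le_sum fun j hj => pow_le_pow_left₀ hε (hs j hj) 2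
    _ ≤ ∑ j, |Z j - W j| ^ 2 :=
        sum_le_sum_of_subset_of_nonneg (subset_univ s) fun _ _ _ => sq_nonneg _

lemma empiricalCDF_sub_le_add (Z W : ι → ℝ) {ε : ℝ} (hε : 0 < ε)
    (hsum : ∑ j, |Z j - W j| ^ 2 ≤ Fintype.card ι * ε ^ 3) (x : ℝ) :
    empiricalCDF Z (x - ε) ≤ empiricalCDF W x + ε := by
  set far : Finset ι := {j | Z j ≤ x - ε ∧ x < W j}
  have hcard : #{j | Z j ≤ x - ε} ≤ #far + #{j | W j ≤ x} := by
    refine (card_le_card fun j hj => ?_).trans (card_union_le _ _)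
    by_cases hW : W j ≤ x <;> simp_all [far]
  have hfar : #far * ε ^ 2 ≤ Fintype.card ι * ε ^ 3 := by
    refine (card_mul_sq_le_sum_sq_abs_sub Z W hε.le far fun j hj => ?_).trans hsum
    simp only [far, mem_filter, mem_univ, true_and] at hj
    rw [abs_sub_comm]
    exact (by linarith : ε ≤ W j - Z j).trans (le_abs_self _)
  have hfar' : (#far : ℝ) / Fintype.card ι ≤ ε := by
    refine div_le_of_le_mul₀ (Nat.cast_nonneg _) hε.le ?_
    nlinarith [pow_pos hε 2]
  calc empiricalCDF Z (x - ε) ≤ (#far + #{j | W j ≤ x} : ℝ) / Fintype.card ι := by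
        unfold empiricalCDF; gcongr; exact_mod_cast hcard
    _ ≤ empiricalCDF W x + ε := by rw [add_div]; unfold empiricalCDF; linarith

lemma levyDist_empiricalCDF_pow_three_le (Z W : ι → ℝ) :
    levyDist (empiricalCDF Z) (empiricalCDF W) ^ 3 ≤
      (Fintype.card ι : ℝ)⁻¹ * ∑ j, |Z j - W j| ^ 2 := by
  set S := (Fintype.card ι : ℝ)⁻¹ * ∑ j, |Z j - W j| ^ 2
  have hS : 0 ≤ S := by positivity
  have hsum : ∑ j, |Z j - W j| ^ 2 = Fintype.card ι * S := by
    rcases isEmpty_or_nonempty ι with hι | hι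
    · simp
    · exact (mul_inv_cancel_left₀ (Nat.cast_ne_zero.mpr Fintype.card_ne_zero) _).symm
  have hsymm : ∑ j, |W j - Z j| ^ 2 = ∑ j, |Z j - W j| ^ 2 := by simp only [abs_sub_comm]
  set c := S ^ (3⁻¹ : ℝ)
  have hc : c ^ 3 = S := by simpa using Real.rpow_inv_natCast_pow hS three_ne_zero
  have hLc : levyDist (empiricalCDF Z) (empiricalCDF W) ≤ c := by
    refine levyDist_le (by positivity) fun ε hε x => ?_
    have hε0 : 0 < ε := lt_of_le_of_lt (by positivity) hε
    have hSε : ∑ j, |Z j - W j| ^ 2 ≤ Fintype.card ι * ε ^ 3 := by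
      rw [hsum, ← hc]
      gcongr
    constructor
    · linarith [empiricalCDF_sub_le_add Z W hε0 hSε x]
    · simpa using empiricalCDF_sub_le_add W Z hε0 (hsymm ▸ hSε) (x + ε)
  calc levyDist (empiricalCDF Z) (empiricalCDF W) ^ 3 ≤ c ^ 3 := by
        gcongr; exact levyDist_nonneg _ _
    _ = S := hc

end Empirical

theorem levy_dist_cubed_le_general (n : ℕ) (X Y : Fin n → ℝ) (F G : ℝ → ℝ)
    (hF : ∀ t : ℝ, F t = ((Finset.univ.filter fun j => X j ≤ t).card : ℝ) / n)
    (hG : ∀ t : ℝ, G t = ((Finset.univ.filter fun j => Y j ≤ t).card : ℝ) / n) :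
    levyDist F G ^ 3 ≤ (1 / (n:ℝ)) * ∑ j, |X j - Y j| ^ 2 := by
  have hF' : F = empiricalCDF X := funext fun t => by simp [hF, empiricalCDF]
  have hG' : G = empiricalCDF Y := funext fun t => by simp [hG, empiricalCDF]
  simpa [hF', hG'] using levyDist_empiricalCDF_pow_three_le X Y

/-- For empirical distribution functions `F` and `G` of the ordered samples
`X_(1) ≤ … ≤ X_(n)` and `x_(1) ≤ … ≤ x_(n)`, the Lévy distance satisfies
`L(F,G)³ ≤ (1/n) ∑_j |X_(j) - x_(j)|²`. -/
theorem levy_dist_cubed_le (n : ℕ) (hn : 1 ≤ n) (X Y : Fin n → ℝ)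
    (hX : Monotone X) (hY : Monotone Y) (F G : ℝ → ℝ)
    (hF : ∀ t : ℝ, F t = ((Finset.univ.filter fun j => X j ≤ t).card : ℝ) / n)
    (hG : ∀ t : ℝ, G t = ((Finset.univ.filter fun j => Y j ≤ t).card : ℝ) / n) :
    levyDist F G ^ 3 ≤ (1 / (n:ℝ)) * ∑ j, |X j - Y j| ^ 2 :=
  levy_dist_cubed_le_general n X Y F G hF hG
end

section
/- Every symmetric tridiagonal real n×n matrix with nonzero off-diagonal entries has n distinct real eigenvalues. -/
/-!
An eigenvector `v` of a Jacobi matrix is determined by `v 0`: row `i` of `A v = μ v` expresses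
`A i (i+1) * v (i+1)` through `v 0, …, v i`, and `A i (i+1) ≠ 0`. Hence two eigenvectors for the
same eigenvalue are proportional, and two orthonormal eigenvectors of a symmetric matrix cannot
share an eigenvalue.
-/

open Matrix

theorem Matrix.eq_zero_of_mulVec_eq_smul_of_apply_zero {R : Type*} [Semiring R]
    [NoZeroDivisors R] {n : ℕ} {A : Matrix (Fin (n + 1)) (Fin (n + 1)) R}
    (htri : ∀ i j : Fin (n + 1), (i : ℕ) + 1 < (j : ℕ) → A i j = 0)
    (hoff : ∀ i j : Fin (n + 1), (i : ℕ) + 1 = (j : ℕ) → A i j ≠ 0)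
    {μ : R} {v : Fin (n + 1) → R} (hv : A *ᵥ v = μ • v) (h0 : v 0 = 0) : v = 0 := by
  by_contra hne
  obtain ⟨j, hj, hmin⟩ := wellFounded_lt.has_min {j | v j ≠ 0} (Function.ne_iff.mp hne)
  obtain ⟨i, rfl⟩ := Fin.exists_succ_eq.mpr (fun h : j = 0 => hj (h ▸ h0))
  have hbefore : ∀ k < i.succ, v k = 0 := fun k hk => by_contra (hmin k · hk)
  have hrow : A i.castSucc i.succ * v i.succ = 0 := by
    have := congrFun hv i.castSucc
    rw [mulVec, dotProduct, Finset.sum_eq_single i.succ] at this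
    · simpa [hbefore _ i.castSucc_lt_succ] using this
    · intro k _ hk
      rcases lt_or_gt_of_ne hk with hlt | hgt
      · rw [hbefore k hlt, mul_zero]
      · rw [htri _ _ (by simpa [Fin.lt_def] using hgt), zero_mul]
    · simp
  exact hj ((mul_eq_zero.mp hrow).resolve_left (hoff _ _ rfl))

theorem Matrix.IsHermitian.eigenvalues_injective_of_eq_zero_of_apply_eq_zero
    {𝕜 : Type*} [RCLike 𝕜] {ι : Type*} [Fintype ι] [DecidableEq ι]
    {A : Matrix ι ι 𝕜} (hA : A.IsHermitian) (i₀ : ι)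
    (h : ∀ (μ : ℝ) (v : ι → 𝕜), A *ᵥ v = μ • v → v i₀ = 0 → v = 0) :
    Function.Injective hA.eigenvalues := by
  intro i j hij
  by_contra hne
  set b := hA.eigenvectorBasis
  have hb_eig (k : ι) : A *ᵥ b k = hA.eigenvalues k • b k := hA.mulVec_eigenvectorBasis k
  have hb_ne (k : ι) : (b k : ι → 𝕜) i₀ ≠ 0 := fun hk =>
    b.orthonormal.ne_zero k (WithLp.ofLp_injective 2 (h _ _ (hb_eig k) hk))
  set u := (b j : ι → 𝕜) i₀ • b i - (b i : ι → 𝕜) i₀ • b j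
  have hu : u = 0 := by
    refine WithLp.ofLp_injective 2 (h (hA.eigenvalues i) _ ?_ ?_)
    · simp only [u, WithLp.ofLp_sub, WithLp.ofLp_smul, mulVec_sub, mulVec_smul, hb_eig, hij,
        smul_sub, smul_comm (hA.eigenvalues j : ℝ)]
    · simp [u, mul_comm]
  have hinner : inner 𝕜 (b i) u = (b j : ι → 𝕜) i₀ := by
    simp [u, inner_sub_right, inner_smul_right, hne]
  exact hb_ne j (by simpa [hu] using hinner.symm)

/-- A symmetric tridiagonal real matrix with nonzero sub/super-diagonal entries has
`n` distinct real eigenvalues: its characteristic polynomial has `n` distinct real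
roots. -/
theorem jacobi_simple_spectrum (n : ℕ) (A : Matrix (Fin n) (Fin n) ℝ)
    (hsym : A.IsSymm)
    (htri : ∀ i j : Fin n, (i:ℕ) + 1 < (j:ℕ) → A i j = 0)
    (hoff : ∀ i j : Fin n, (i:ℕ) + 1 = (j:ℕ) → A i j ≠ 0) :
    (Matrix.charpoly A).roots.toFinset.card = n := by
  have hA : A.IsHermitian := isHermitian_iff_isSymm.mpr hsym
  rcases n with _ | n
  · simp
  have hinj : Function.Injective hA.eigenvalues :=
    hA.eigenvalues_injective_of_eq_zero_of_apply_eq_zero 0 fun _ _ hv h0 =>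
      eq_zero_of_mulVec_eq_smul_of_apply_zero htri hoff hv h0
  rw [hA.roots_charpoly_eq_eigenvalues, Multiset.toFinset_map, Finset.val_toFinset,
    Finset.card_image_of_injective _ (by simpa using hinj), Finset.card_univ, Fintype.card_fin]
end
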